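/- arXiv:0912.4784 — 2 statements merged into one kernel-verified Lean document; each statement's English description precedes it below -/
import Mathlib

section
/- Let B be a d×d real matrix, ‖·‖ a norm on ℝ^d, and p ∈ [1,∞). Suppose all eigenvalues of B have positive real part (so the integral converges). Define ‖x‖_B = (∫₀¹ ‖s^B x‖^p s^{-1} ds)^{1/p}. Then ‖·‖_B is a norm on ℝ^d. -/
/-
With `ν = ds / s` on `(0, 1]`, `‖x‖_B` is the `Lᵖ(ν)`-norm of the orbit `s ↦ s ^ B x`, which is
linear in `x`. Homogeneity and the triangle inequality (Minkowski) are therefore inherited from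
`Lᵖ(ν)`, and positivity holds because `s ^ B` is invertible and `ν ≠ 0`. What has to be shown is that
the orbit lies in `Lᵖ(ν)`. Every eigenvalue of `exp (-B)` is `exp (-μ)` for an eigenvalue `μ` of `B`,
so the spectral radius of `exp (-B)` is `< 1`; by Gelfand's formula some power `exp (-B) ^ N` has
norm `< 1`, whence `‖s ^ B‖ ≤ C s ^ ε` on `(0, 1]` for some `ε > 0`.
-/

open Matrix Set MeasureTheory

/-- The Jurek–Mason functional `‖x‖_B = (∫₀¹ ‖s^B x‖^p s⁻¹ ds)^{1/p}`. -/
noncomputable def normB {d : ℕ} (B : Matrix (Fin d) (Fin d) ℝ) (p : ℝ)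
    (x : Fin d → ℝ) : ℝ :=
  (∫ s in Ioc (0 : ℝ) 1,
    ‖(NormedSpace.exp ((Real.log s) • B)).mulVec x‖ ^ p / s) ^ (1 / p)

open NormedSpace
open scoped ENNReal

theorem norm_mul_pow_le_mul_norm_pow {R : Type*} [SeminormedRing R] (a b : R) (n : ℕ) :
    ‖a * b ^ n‖ ≤ ‖a‖ * ‖b‖ ^ n := by
  induction n with
  | zero => simp
  | succ n ih =>
    calc ‖a * b ^ (n + 1)‖ = ‖a * b ^ n * b‖ := by rw [pow_succ, mul_assoc]
      _ ≤ ‖a * b ^ n‖ * ‖b‖ := norm_mul_le _ _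
      _ ≤ ‖a‖ * ‖b‖ ^ n * ‖b‖ := by gcongr
      _ = ‖a‖ * ‖b‖ ^ (n + 1) := by rw [pow_succ, mul_assoc]

section BanachAlgebra

variable {𝕂 𝔸 : Type*} [RCLike 𝕂] [NormedRing 𝔸] [NormedAlgebra ℚ 𝔸] [NormedAlgebra 𝕂 𝔸]
  [CompleteSpace 𝔸]

variable (𝕂) in
theorem exp_smul_eq_exp_fract_smul_mul_pow (b : 𝔸) (t : ℝ) :
    exp ((t : 𝕂) • b) = exp (((t - ⌊t⌋₊ : ℝ) : 𝕂) • b) * exp b ^ ⌊t⌋₊ := by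
  have hsplit : (t : 𝕂) • b = ((t - ⌊t⌋₊ : ℝ) : 𝕂) • b + ((⌊t⌋₊ : ℕ) : 𝕂) • b := by
    rw [← add_smul]; push_cast; ring_nf
  rw [hsplit, NormedSpace.exp_add_of_commute (((Commute.refl b).smul_left _).smul_right _),
    Nat.cast_smul_eq_nsmul, NormedSpace.exp_nsmul]

variable (𝕂) in
theorem exists_norm_exp_smul_le_of_norm_exp_lt_one {b : 𝔸} (hb : ‖exp b‖ < 1) :
    ∃ C ε : ℝ, 0 < ε ∧ ∀ t : ℝ, 0 ≤ t → ‖exp ((t : 𝕂) • b)‖ ≤ C * Real.exp (-(ε * t)) := by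
  obtain ⟨M, hM⟩ := (isCompact_Icc : IsCompact (Icc (0 : ℝ) 1)).exists_bound_of_continuousOn
    (f := fun θ : ℝ => exp ((θ : 𝕂) • b))
    (exp_continuous.comp ((RCLike.continuous_ofReal).smul continuous_const)).continuousOn
  obtain ⟨c, hbc, hc1⟩ := exists_between hb
  have hc0 : 0 < c := (norm_nonneg _).trans_lt hbc
  refine ⟨M / c, -Real.log c, neg_pos.mpr (Real.log_neg hc0 hc1), fun t ht => ?_⟩
  have hfloor := Nat.lt_floor_add_one t
  have hθ : t - ⌊t⌋₊ ∈ Icc (0 : ℝ) 1 := ⟨sub_nonneg.mpr (Nat.floor_le ht), by linarith⟩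
  have hM0 : 0 ≤ M := (norm_nonneg _).trans (hM _ hθ)
  calc ‖exp ((t : 𝕂) • b)‖ ≤ ‖exp (((t - ⌊t⌋₊ : ℝ) : 𝕂) • b)‖ * ‖exp b‖ ^ ⌊t⌋₊ := by
        rw [exp_smul_eq_exp_fract_smul_mul_pow 𝕂 b t]; exact norm_mul_pow_le_mul_norm_pow _ _ _
    _ ≤ M * c ^ (⌊t⌋₊ : ℝ) := by
        rw [Real.rpow_natCast]; gcongr; exact hM _ hθ
    _ ≤ M * c ^ (t - 1) :=
        mul_le_mul_of_nonneg_left (Real.rpow_le_rpow_of_exponent_ge hc0 hc1.le (by linarith)) hM0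
    _ = M / c * Real.exp (-(-Real.log c * t)) := by
        rw [Real.rpow_sub hc0, Real.rpow_one, Real.rpow_def_of_pos hc0]; ring_nf

theorem exists_norm_exp_smul_le_of_forall_norm_lt_one [NormedAlgebra ℂ 𝔸] {a : 𝔸}
    (h : ∀ z ∈ spectrum ℂ (exp a), ‖z‖ < 1) :
    ∃ C ε : ℝ, 0 < ε ∧ ∀ t : ℝ, 0 ≤ t → ‖exp ((t : ℂ) • a)‖ ≤ C * Real.exp (-(ε * t)) := by
  have hρ : spectralRadius ℂ (exp a) < 1 := by
    rcases (spectrum ℂ (exp a)).eq_empty_or_nonempty with he | hne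
    · simp [spectralRadius, he]
    · obtain ⟨z, hz, hrad⟩ := spectrum.exists_nnnorm_eq_spectralRadius_of_nonempty hne
      rw [← hrad]
      exact_mod_cast h z hz
  -- Gelfand's formula: `‖exp a ^ m‖ ^ (1 / m) < 1` for large `m`.
  obtain ⟨n, hn⟩ := ((spectrum.pow_norm_pow_one_div_tendsto_nhds_spectralRadius (exp a)).eventually
    (gt_mem_nhds hρ)).exists_forall_of_atTop
  have hpow : ‖exp (((n + 1 : ℕ) : ℂ) • a)‖ < 1 := by
    have hlt := ENNReal.ofReal_lt_one.mp (hn (n + 1) n.le_succ)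
    rw [Nat.cast_smul_eq_nsmul, NormedSpace.exp_nsmul]
    exact not_le.mp fun h1 => (Real.one_le_rpow h1 (by positivity)).not_gt hlt
  obtain ⟨C, ε, hε, hdecay⟩ := exists_norm_exp_smul_le_of_norm_exp_lt_one ℂ hpow
  refine ⟨C, ε / (n + 1), by positivity, fun t ht => ?_⟩
  have hsmul : ((t / (n + 1) : ℝ) : ℂ) • (((n + 1 : ℕ) : ℂ) • a) = (t : ℂ) • a := by
    rw [smul_smul]; push_cast; field_simp
  have hexp : ε * (t / (n + 1)) = ε / (n + 1) * t := by ring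
  rw [← hsmul, ← hexp]
  exact hdecay (t / (n + 1)) (by positivity)

end BanachAlgebra

-- The multiplicative Haar measure `ds / s`, restricted to `(0, 1]`.
noncomputable def mulHaarIoc : Measure ℝ :=
  (volume.restrict (Ioc (0 : ℝ) 1)).withDensity fun s => ENNReal.ofReal s⁻¹

theorem ae_mem_Ioc_mulHaarIoc : ∀ᵐ s ∂mulHaarIoc, s ∈ Ioc (0 : ℝ) 1 :=
  (withDensity_absolutelyContinuous _ _).ae_le (ae_restrict_mem measurableSet_Ioc)

theorem mulHaarIoc_ne_zero : mulHaarIoc ≠ 0 := by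
  rw [mulHaarIoc, Ne, withDensity_eq_zero_iff measurable_inv.ennreal_ofReal.aemeasurable]
  intro h
  have hfalse : ∀ᵐ s ∂volume.restrict (Ioc (0 : ℝ) 1), False := by
    filter_upwards [h, ae_restrict_mem measurableSet_Ioc] with s hs hmem
    simp only [Pi.zero_apply, ENNReal.ofReal_eq_zero, inv_nonpos] at hs
    exact hmem.1.not_ge hs
  rw [Filter.eventually_false_iff_eq_bot, ae_eq_bot, Measure.restrict_eq_zero,
    Real.volume_Ioc] at hfalse
  norm_num at hfalse

theorem integral_mulHaarIoc (g : ℝ → ℝ) :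
    ∫ s, g s ∂mulHaarIoc = ∫ s in Ioc (0 : ℝ) 1, g s / s := by
  rw [mulHaarIoc, integral_withDensity_eq_integral_toReal_smul measurable_inv.ennreal_ofReal
    (ae_of_all _ fun _ => ENNReal.ofReal_lt_top)]
  refine setIntegral_congr_fun measurableSet_Ioc fun s hs => ?_
  rw [ENNReal.toReal_ofReal (inv_nonneg.mpr hs.1.le), smul_eq_mul, div_eq_inv_mul]

theorem memLp_rpow_mulHaarIoc {ε : ℝ} (hε : 0 < ε) {p : ℝ≥0∞} (hp : p ≠ ∞) :
    MemLp (fun s : ℝ => s ^ ε) p mulHaarIoc := by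
  have hmeas : AEStronglyMeasurable (fun s : ℝ => s ^ ε) mulHaarIoc :=
    (measurable_id.pow_const ε).aestronglyMeasurable
  rcases eq_or_ne p 0 with rfl | hp0
  · exact memLp_zero_iff_aestronglyMeasurable.mpr hmeas
  have hpos : 0 < p.toReal := ENNReal.toReal_pos hp0 hp
  rw [← integrable_norm_rpow_iff hmeas hp0 hp, mulHaarIoc, integrable_withDensity_iff
    measurable_inv.ennreal_ofReal (ae_of_all _ fun _ => ENNReal.ofReal_lt_top)]
  have hint : IntegrableOn (fun s : ℝ => s ^ (ε * p.toReal - 1)) (Ioc 0 1) := by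
    rw [← intervalIntegrable_iff_integrableOn_Ioc_of_le zero_le_one]
    exact intervalIntegral.intervalIntegrable_rpow' (by nlinarith)
  refine hint.congr_fun (fun s hs => ?_) measurableSet_Ioc
  dsimp only
  rw [Real.norm_of_nonneg (Real.rpow_nonneg hs.1.le _), ← Real.rpow_mul hs.1.le,
    ENNReal.toReal_ofReal (inv_nonneg.mpr hs.1.le), Real.rpow_sub hs.1, Real.rpow_one,
    div_eq_mul_inv]

namespace Matrix

variable {n : Type*} [Fintype n] [DecidableEq n]

section LinftyOpNorm

attribute [local instance] Matrix.linftyOpNormedRing Matrix.linftyOpNormedAlgebra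

theorem exp_mulVec_of_mulVec_eq_smul {𝕂 : Type*} [RCLike 𝕂] {A : Matrix n n 𝕂} {μ : 𝕂}
    {v : n → 𝕂} (hv : A *ᵥ v = μ • v) : exp A *ᵥ v = exp μ • v := by
  have hpow (k : ℕ) : A ^ k *ᵥ v = μ ^ k • v := by
    induction k with
    | zero => simp
    | succ k ih => rw [pow_succ', ← mulVec_mulVec, ih, mulVec_smul, hv, smul_smul, ← pow_succ]
  have hmap := (exp_series_hasSum_exp' (𝕂 := 𝕂) A).map
    (mulVec.addMonoidHomLeft v) (continuous_id.matrix_mulVec continuous_const)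
  refine hmap.unique ?_
  simpa [Function.comp_def, mulVec.addMonoidHomLeft, smul_mulVec, hpow, smul_smul] using
    (exp_series_hasSum_exp' (𝕂 := 𝕂) μ).smul_const v

theorem exists_exp_eq_of_mem_spectrum_exp {A : Matrix n n ℂ} {z : ℂ}
    (hz : z ∈ spectrum ℂ (exp A)) : ∃ μ ∈ spectrum ℂ A, exp μ = z := by
  -- `A` commutes with `exp A`, so it has an eigenvector in the `z`-eigenspace of `exp A`.
  rw [← AlgEquiv.spectrum_eq toLinAlgEquiv', ← Module.End.hasEigenvalue_iff_mem_spectrum] at hz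
  have : Nontrivial (Module.End.eigenspace (toLinAlgEquiv' (exp A)) z) :=
    Submodule.nontrivial_iff_ne_bot.mpr hz
  have hcomm := ((Commute.refl A).exp_right).map (toLinAlgEquiv' (R := ℂ) (n := n))
  obtain ⟨μ, hμ⟩ := Module.End.exists_eigenvalue ((toLinAlgEquiv' A).restrict
    (Module.End.mapsTo_genEigenspace_of_comm hcomm.symm z 1))
  obtain ⟨⟨v, hvz⟩, hv⟩ := hμ.exists_hasEigenvector
  have hvμ : A *ᵥ v = μ • v := congrArg Subtype.val hv.apply_eq_smul
  have hv0 : v ≠ 0 := fun h => hv.2 (Subtype.ext h)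
  refine ⟨μ, ?_, ?_⟩
  · rw [← AlgEquiv.spectrum_eq toLinAlgEquiv', ← Module.End.hasEigenvalue_iff_mem_spectrum]
    exact Module.End.hasEigenvalue_of_hasEigenvector ⟨Module.End.mem_eigenspace_iff.mpr hvμ, hv0⟩
  · have hvz' : exp A *ᵥ v = z • v := Module.End.mem_eigenspace_iff.mp hvz
    rw [exp_mulVec_of_mulVec_eq_smul hvμ] at hvz'
    exact smul_left_injective ℂ hv0 hvz'

theorem linfty_opNorm_map_algebraMap {𝕂 : Type*} [RCLike 𝕂] (M : Matrix n n ℝ) :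
    ‖M.map (algebraMap ℝ 𝕂)‖ = ‖M‖ := by
  simp [linfty_opNorm_def]

theorem map_algebraMap_exp (M : Matrix n n ℝ) :
    (exp M).map (algebraMap ℝ ℂ) = exp (M.map (algebraMap ℝ ℂ)) :=
  map_exp ((algebraMap ℝ ℂ).mapMatrix) (continuous_id.matrix_map Complex.continuous_ofReal) M

theorem norm_lt_one_of_mem_spectrum_exp_neg {A : Matrix n n ℂ}
    (hA : ∀ μ ∈ spectrum ℂ A, 0 < μ.re) : ∀ z ∈ spectrum ℂ (exp (-A)), ‖z‖ < 1 := by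
  intro z hz
  obtain ⟨μ, hμ, rfl⟩ := exists_exp_eq_of_mem_spectrum_exp hz
  rw [← spectrum.neg_eq, Set.mem_neg] at hμ
  rw [← Complex.exp_eq_exp_ℂ, Complex.norm_exp, Real.exp_lt_one_iff]
  simpa using hA _ hμ

theorem exists_norm_exp_log_smul_mulVec_le (B : Matrix n n ℝ)
    (hB : ∀ μ ∈ spectrum ℂ (B.map (algebraMap ℝ ℂ)), 0 < μ.re) :
    ∃ C ε : ℝ, 0 < ε ∧ ∀ s ∈ Ioc (0 : ℝ) 1, ∀ x : n → ℝ,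
      ‖exp (Real.log s • B) *ᵥ x‖ ≤ C * s ^ ε * ‖x‖ := by
  obtain ⟨C, ε, hε, hdecay⟩ :=
    exists_norm_exp_smul_le_of_forall_norm_lt_one (norm_lt_one_of_mem_spectrum_exp_neg hB)
  refine ⟨C, ε, hε, fun s hs x => ?_⟩
  have hexp : (exp (Real.log s • B)).map (algebraMap ℝ ℂ)
      = exp (((-Real.log s : ℝ) : ℂ) • -B.map (algebraMap ℝ ℂ)) := by
    rw [map_algebraMap_exp]; congr 1; ext; simp
  have hpow : Real.exp (-(ε * -Real.log s)) = s ^ ε := by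
    rw [Real.rpow_def_of_pos hs.1]; ring_nf
  calc ‖exp (Real.log s • B) *ᵥ x‖ ≤ ‖exp (Real.log s • B)‖ * ‖x‖ := linfty_opNorm_mulVec _ _
    _ ≤ C * s ^ ε * ‖x‖ := by
      rw [← linfty_opNorm_map_algebraMap (𝕂 := ℂ), hexp, ← hpow]
      gcongr
      exact hdecay _ (neg_nonneg.mpr (Real.log_nonpos hs.1.le hs.2))

theorem continuous_exp_smul_mulVec (B : Matrix n n ℝ) (x : n → ℝ) :
    Continuous fun r : ℝ => exp (r • B) *ᵥ x :=
  (exp_continuous.comp (continuous_id.smul continuous_const)).matrix_mulVec continuous_const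

end LinftyOpNorm

noncomputable def rpowMulVec (B : Matrix n n ℝ) (x : n → ℝ) (s : ℝ) : n → ℝ :=
  exp (Real.log s • B) *ᵥ x

theorem rpowMulVec_add (B : Matrix n n ℝ) (x y : n → ℝ) :
    rpowMulVec B (x + y) = rpowMulVec B x + rpowMulVec B y := by
  ext1 s; exact mulVec_add _ x y

theorem rpowMulVec_smul (B : Matrix n n ℝ) (a : ℝ) (x : n → ℝ) :
    rpowMulVec B (a • x) = a • rpowMulVec B x := by
  ext1 s; exact mulVec_smul _ a x

theorem rpowMulVec_ne_zero (B : Matrix n n ℝ) {x : n → ℝ} (hx : x ≠ 0) (s : ℝ) :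
    rpowMulVec B x s ≠ 0 := fun h =>
  hx <| mulVec_injective_iff_isUnit.mpr (Matrix.isUnit_exp (Real.log s • B)) <|
    h.trans (mulVec_zero _).symm

theorem measurable_rpowMulVec (B : Matrix n n ℝ) (x : n → ℝ) : Measurable (rpowMulVec B x) :=
  (continuous_exp_smul_mulVec B x).measurable.comp Real.measurable_log

theorem memLp_rpowMulVec {B : Matrix n n ℝ}
    (hB : ∀ μ ∈ spectrum ℂ (B.map (algebraMap ℝ ℂ)), 0 < μ.re) {p : ℝ≥0∞} (hp : p ≠ ∞)
    (x : n → ℝ) : MemLp (rpowMulVec B x) p mulHaarIoc := by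
  obtain ⟨C, ε, hε, hbound⟩ := exists_norm_exp_log_smul_mulVec_le B hB
  refine ((memLp_rpow_mulHaarIoc hε hp).const_mul (C * ‖x‖)).of_le
    (measurable_rpowMulVec B x).aestronglyMeasurable ?_
  filter_upwards [ae_mem_Ioc_mulHaarIoc] with s hs
  calc ‖rpowMulVec B x s‖ ≤ C * s ^ ε * ‖x‖ := hbound s hs x
    _ = C * ‖x‖ * s ^ ε := by ring
    _ ≤ ‖C * ‖x‖ * s ^ ε‖ := Real.le_norm_self _

theorem lpNorm_rpowMulVec_pos {B : Matrix n n ℝ}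
    (hB : ∀ μ ∈ spectrum ℂ (B.map (algebraMap ℝ ℂ)), 0 < μ.re) {p : ℝ≥0∞} (hp0 : p ≠ 0)
    (hp : p ≠ ∞) {x : n → ℝ} (hx : x ≠ 0) : 0 < lpNorm (rpowMulVec B x) p mulHaarIoc := by
  refine lpNorm_nonneg.lt_of_ne' fun h => mulHaarIoc_ne_zero ?_
  have hfalse : ∀ᵐ s ∂mulHaarIoc, False :=
    ((lpNorm_eq_zero (memLp_rpowMulVec hB hp x) hp0).mp h).mono fun s hs =>
      rpowMulVec_ne_zero B hx s hs
  rwa [Filter.eventually_false_iff_eq_bot, ae_eq_bot] at hfalse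

end Matrix

theorem normB_eq_lpNorm {d : ℕ} (B : Matrix (Fin d) (Fin d) ℝ) {p : ℝ} (hp : 0 < p)
    (x : Fin d → ℝ) : normB B p x = lpNorm (rpowMulVec B x) (ENNReal.ofReal p) mulHaarIoc := by
  rw [lpNorm_eq_integral_norm_rpow_toReal (by simpa using hp) ENNReal.ofReal_ne_top
    (measurable_rpowMulVec B x).aestronglyMeasurable, ENNReal.toReal_ofReal hp.le,
    integral_mulHaarIoc, normB, one_div]
  rfl

/-- If all eigenvalues of `B` have positive real part and `1 ≤ p < ∞`, then `‖·‖_B`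
is a norm on `ℝ^d`: triangle inequality, absolute homogeneity, and positivity. -/
theorem stmt_9 (d : ℕ) (B : Matrix (Fin d) (Fin d) ℝ) (p : ℝ) (hp : 1 ≤ p)
    (hspec : ∀ μ ∈ spectrum ℂ (B.map (algebraMap ℝ ℂ)), 0 < μ.re) :
    (∀ x y : Fin d → ℝ, normB B p (x + y) ≤ normB B p x + normB B p y) ∧
    (∀ (a : ℝ) (x : Fin d → ℝ), normB B p (a • x) = |a| * normB B p x) ∧
    (∀ x : Fin d → ℝ, x ≠ 0 → 0 < normB B p x) := by
  have hp0 : 0 < p := by linarith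
  have hP : ENNReal.ofReal p ≠ ∞ := ENNReal.ofReal_ne_top
  simp only [normB_eq_lpNorm B hp0]
  refine ⟨fun x y => ?_, fun a x => ?_, fun x hx => ?_⟩
  · rw [rpowMulVec_add]
    exact lpNorm_add_le (memLp_rpowMulVec hspec hP x) (ENNReal.one_le_ofReal.mpr hp)
  · rw [rpowMulVec_smul, lpNorm_const_smul, coe_nnnorm, Real.norm_eq_abs]
  · exact lpNorm_rpowMulVec_pos hspec (by simpa using hp0) hP hx
end

section
/- With ‖x‖_B = (∫₀¹ ‖s^B x‖^p s^{-1} ds)^{1/p} as above (all eigenvalues of B with positive real part), for each x ≠ 0 the map t ↦ ‖t^B x‖_B is strictly increasing in t > 0. -/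
/-!
Since `s^B t^B = (st)^B`, the substitution `r = st` gives
`‖t^B x‖_B^p = ∫₀^t ‖r^B x‖^p r⁻¹ dr`, and for `x ≠ 0` the integrand is positive, so the integral
grows strictly with `t`. The integral is finite because `r^B x` decays like `r^ε` as `r → 0`:
on the generalized eigenspace of `B` (over `ℂ`) for an eigenvalue `μ`, `r^B` acts as `r^μ` times a
polynomial in `log r`, and `Re μ > 0`.
-/

open Matrix Set MeasureTheory

open NormedSpace Nat

theorem norm_ofReal_comp {n : Type*} [Fintype n] (y : n → ℝ) : ‖fun i => (y i : ℂ)‖ = ‖y‖ := by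
  refine le_antisymm ((pi_norm_le_iff_of_nonneg (norm_nonneg y)).2 fun i => ?_)
    ((pi_norm_le_iff_of_nonneg (norm_nonneg _)).2 fun i => ?_)
  · rw [Complex.norm_real]; exact norm_le_pi_norm y i
  · rw [← Complex.norm_real]; exact norm_le_pi_norm (fun i => (y i : ℂ)) i

section MatrixExp

variable {n : Type*} [Fintype n] [DecidableEq n]

theorem Matrix.exp_mulVec_eq_sum_of_pow_mulVec_eq_zero {𝕜 : Type*} [RCLike 𝕜]
    (N : Matrix n n 𝕜) {v : n → 𝕜} {k : ℕ} (hv : N ^ k *ᵥ v = 0) :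
    exp N *ᵥ v = ∑ i ∈ Finset.range k, (i !⁻¹ : 𝕜) • (N ^ i *ᵥ v) := by
  have hsum : HasSum (fun i : ℕ => (i !⁻¹ : 𝕜) • (N ^ i *ᵥ v)) (exp N *ᵥ v) := by
    open scoped Norms.Operator in
    convert (exp_series_hasSum_exp' (𝕂 := 𝕜) N).map
      ((mulVecBilin 𝕜 𝕜).flip v) (continuous_id.matrix_mulVec continuous_const) using 1
    · ext i : 1
      simp
    · rfl
  refine hsum.unique (hasSum_sum_of_ne_finset_zero fun i hi => ?_)
  have hki : k ≤ i := by simpa using hi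
  rw [← Nat.sub_add_cancel hki, pow_add, ← mulVec_mulVec, hv, mulVec_zero, smul_zero]

theorem Matrix.norm_exp_smul_mulVec_le_of_pow_mulVec_eq_zero {𝕜 : Type*} [RCLike 𝕜]
    (N : Matrix n n 𝕜) {v : n → 𝕜} {k : ℕ} (hv : N ^ k *ᵥ v = 0) {δ : ℝ} (hδ : 0 < δ)
    (u : ℝ) :
    ‖exp ((u : 𝕜) • N) *ᵥ v‖ ≤
      Real.exp (δ * |u|) * ∑ i ∈ Finset.range k, ‖N ^ i *ᵥ v‖ / δ ^ i := by
  have huv : ((u : 𝕜) • N) ^ k *ᵥ v = 0 := by rw [smul_pow, smul_mulVec, hv, smul_zero]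
  rw [exp_mulVec_eq_sum_of_pow_mulVec_eq_zero _ huv, Finset.mul_sum]
  refine (norm_sum_le _ _).trans (Finset.sum_le_sum fun i _ => ?_)
  have hfact : (δ * |u|) ^ i / i ! ≤ Real.exp (δ * |u|) :=
    Real.pow_div_factorial_le_exp _ (by positivity) i
  calc ‖(i !⁻¹ : 𝕜) • (((u : 𝕜) • N) ^ i *ᵥ v)‖
      = (δ * |u|) ^ i / i ! * (‖N ^ i *ᵥ v‖ / δ ^ i) := by
        rw [smul_pow, smul_mulVec, smul_smul, norm_smul]
        simp only [norm_mul, norm_inv, norm_pow, RCLike.norm_natCast, RCLike.norm_ofReal]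
        field_simp
        ring
    _ ≤ Real.exp (δ * |u|) * (‖N ^ i *ᵥ v‖ / δ ^ i) := by gcongr

theorem Matrix.exp_smul_eq_exp_mul_smul_exp_smul_sub (A : Matrix n n ℂ) (μ c : ℂ) :
    exp (c • A) = Complex.exp (c * μ) • exp (c • (A - μ • 1)) := by
  open scoped Norms.Operator in
  have hscalar : exp (algebraMap ℂ (Matrix n n ℂ) (c * μ)) = algebraMap ℂ _ (exp (c * μ)) :=
    (algebraMap_exp_comm (c * μ)).symm
  have hsplit : c • A = algebraMap ℂ _ (c * μ) + c • (A - μ • 1) := by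
    rw [Algebra.algebraMap_eq_smul_one, smul_sub, smul_smul]; abel
  rw [hsplit, Matrix.exp_add_of_commute _ _ (Algebra.commute_algebraMap_left _ _), hscalar,
    Algebra.algebraMap_eq_smul_one, smul_mul_assoc, one_mul, Complex.exp_eq_exp_ℂ]

theorem Matrix.exists_norm_exp_smul_mulVec_le_of_pow_sub_mulVec_eq_zero (A : Matrix n n ℂ)
    {μ : ℂ} (hμ : 0 < μ.re) {v : n → ℂ} {k : ℕ} (hv : (A - μ • 1) ^ k *ᵥ v = 0) :
    ∃ C, ∀ u ≤ (0 : ℝ), ‖exp ((u : ℂ) • A) *ᵥ v‖ ≤ C * Real.exp (μ.re / 2 * u) := by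
  refine ⟨∑ i ∈ Finset.range k, ‖(A - μ • 1) ^ i *ᵥ v‖ / (μ.re / 2) ^ i, fun u hu => ?_⟩
  have hN := norm_exp_smul_mulVec_le_of_pow_mulVec_eq_zero _ hv (half_pos hμ) u
  rw [abs_of_nonpos hu] at hN
  calc ‖exp ((u : ℂ) • A) *ᵥ v‖
      = Real.exp (u * μ.re) * ‖exp ((u : ℂ) • (A - μ • 1)) *ᵥ v‖ := by
        rw [exp_smul_eq_exp_mul_smul_exp_smul_sub A μ, smul_mulVec, norm_smul, Complex.norm_exp,
          Complex.re_ofReal_mul]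
    _ ≤ Real.exp (u * μ.re) * (Real.exp (μ.re / 2 * -u) *
          ∑ i ∈ Finset.range k, ‖(A - μ • 1) ^ i *ᵥ v‖ / (μ.re / 2) ^ i) := by gcongr; exact hN
    _ = _ := by
        rw [show μ.re / 2 * u = u * μ.re + μ.re / 2 * -u by ring, Real.exp_add]
        ring

def Matrix.decayingSubmodule (A : Matrix n n ℂ) : Submodule ℂ (n → ℂ) where
  carrier := {v | ∃ ε > 0, ∃ C, ∀ u ≤ (0 : ℝ), ‖exp ((u : ℂ) • A) *ᵥ v‖ ≤ C * Real.exp (ε * u)}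
  zero_mem' := ⟨1, one_pos, 0, fun u _ => by simp⟩
  add_mem' := by
    rintro v w ⟨ε, hε, C, hC⟩ ⟨ε', hε', C', hC'⟩
    have hC0 : 0 ≤ C := by simpa using (norm_nonneg _).trans (hC 0 le_rfl)
    have hC0' : 0 ≤ C' := by simpa using (norm_nonneg _).trans (hC' 0 le_rfl)
    refine ⟨min ε ε', lt_min hε hε', C + C', fun u hu => ?_⟩
    have hexp : ∀ η, min ε ε' ≤ η → Real.exp (η * u) ≤ Real.exp (min ε ε' * u) := fun η hη =>
      Real.exp_le_exp.2 (mul_le_mul_of_nonpos_right hη hu)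
    calc ‖exp ((u : ℂ) • A) *ᵥ (v + w)‖
        ≤ C * Real.exp (ε * u) + C' * Real.exp (ε' * u) := by
          rw [mulVec_add]
          exact (norm_add_le _ _).trans (add_le_add (hC u hu) (hC' u hu))
      _ ≤ C * Real.exp (min ε ε' * u) + C' * Real.exp (min ε ε' * u) :=
          add_le_add (mul_le_mul_of_nonneg_left (hexp ε (min_le_left _ _)) hC0)
            (mul_le_mul_of_nonneg_left (hexp ε' (min_le_right _ _)) hC0')
      _ = (C + C') * Real.exp (min ε ε' * u) := by ring
  smul_mem' := by
    rintro c v ⟨ε, hε, C, hC⟩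
    refine ⟨ε, hε, ‖c‖ * C, fun u hu => ?_⟩
    rw [mulVec_smul, norm_smul, mul_assoc]
    exact mul_le_mul_of_nonneg_left (hC u hu) (norm_nonneg c)

theorem Matrix.decayingSubmodule_eq_top {A : Matrix n n ℂ}
    (hA : ∀ μ ∈ spectrum ℂ A, 0 < μ.re) : A.decayingSubmodule = ⊤ := by
  rw [eq_top_iff, ← Module.End.iSup_maxGenEigenspace_eq_top (toLinAlgEquiv' A), iSup_le_iff]
  intro μ v hv
  obtain ⟨k, hk⟩ := (Module.End.mem_maxGenEigenspace _ _ _).1 hv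
  replace hk : (A - μ • 1) ^ k *ᵥ v = 0 := by
    rwa [← map_one (toLinAlgEquiv' (R := ℂ) (n := n)), ← map_smul, ← map_sub, ← map_pow,
      toLinAlgEquiv'_apply] at hk
  by_cases hμ : μ ∈ spectrum ℂ A
  · obtain ⟨C, hC⟩ := exists_norm_exp_smul_mulVec_le_of_pow_sub_mulVec_eq_zero A (hA μ hμ) hk
    exact ⟨μ.re / 2, half_pos (hA μ hμ), C, hC⟩
  · -- `μ` is not an eigenvalue, so its generalized eigenvectors vanish.
    have hunit : IsUnit ((A - μ • 1) ^ k) := by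
      refine IsUnit.pow k ?_
      have hunit := spectrum.notMem_iff.1 hμ
      rw [Algebra.algebraMap_eq_smul_one] at hunit
      simpa using hunit.neg
    rw [← mulVec_zero ((A - μ • 1) ^ k)] at hk
    rw [mulVec_injective_iff_isUnit.2 hunit hk]
    exact zero_mem _

theorem Matrix.exp_map_algebraMap (B : Matrix n n ℝ) :
    (exp B).map (algebraMap ℝ ℂ) = exp (B.map (algebraMap ℝ ℂ)) := by
  open scoped Norms.Operator in
  exact map_exp (algebraMap ℝ ℂ).mapMatrix
    (continuous_id.matrix_map (continuous_algebraMap ℝ ℂ)) B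

theorem Matrix.norm_exp_smul_mulVec_ofReal (B : Matrix n n ℝ) (x : n → ℝ) (u : ℝ) :
    ‖exp (u • B) *ᵥ x‖ = ‖exp ((u : ℂ) • B.map (algebraMap ℝ ℂ)) *ᵥ (fun i => (x i : ℂ))‖ := by
  have hmap : (u : ℂ) • B.map (algebraMap ℝ ℂ) = (u • B).map (algebraMap ℝ ℂ) := by
    ext; simp
  have hvec : (exp (u • B)).map (algebraMap ℝ ℂ) *ᵥ (fun i => (x i : ℂ))
      = fun i => ((exp (u • B) *ᵥ x) i : ℂ) :=
    funext fun i => (RingHom.map_mulVec (algebraMap ℝ ℂ) (exp (u • B)) x i).symm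
  rw [hmap, ← exp_map_algebraMap, hvec, norm_ofReal_comp]

theorem Matrix.exists_norm_exp_smul_mulVec_le (B : Matrix n n ℝ)
    (hB : ∀ μ ∈ spectrum ℂ (B.map (algebraMap ℝ ℂ)), 0 < μ.re) (x : n → ℝ) :
    ∃ ε > 0, ∃ C, ∀ u ≤ (0 : ℝ), ‖exp (u • B) *ᵥ x‖ ≤ C * Real.exp (ε * u) := by
  have hx : (fun i => (x i : ℂ)) ∈ (B.map (algebraMap ℝ ℂ)).decayingSubmodule := by
    rw [decayingSubmodule_eq_top hB]; exact Submodule.mem_top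
  obtain ⟨ε, hε, C, hC⟩ := hx
  exact ⟨ε, hε, C, fun u hu => (norm_exp_smul_mulVec_ofReal B x u).trans_le (hC u hu)⟩

end MatrixExp

section Integrand

variable {n : Type*} [Fintype n] [DecidableEq n]

theorem Matrix.exp_log_smul_mul_exp_log_smul (B : Matrix n n ℝ) {s t : ℝ} (hs : 0 < s)
    (ht : 0 < t) : exp (Real.log s • B) * exp (Real.log t • B) = exp (Real.log (s * t) • B) := by
  rw [← exp_add_of_commute _ _ (((Commute.refl B).smul_left _).smul_right _), ← add_smul,
    Real.log_mul hs.ne' ht.ne']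

noncomputable def normBIntegrand (B : Matrix n n ℝ) (p : ℝ) (x : n → ℝ) (r : ℝ) : ℝ :=
  ‖exp (Real.log r • B) *ᵥ x‖ ^ p / r

theorem normBIntegrand_nonneg (B : Matrix n n ℝ) (p : ℝ) (x : n → ℝ) {r : ℝ} (hr : 0 ≤ r) :
    0 ≤ normBIntegrand B p x r :=
  div_nonneg (Real.rpow_nonneg (norm_nonneg _) p) hr

theorem normBIntegrand_pos (B : Matrix n n ℝ) (p : ℝ) {x : n → ℝ} (hx : x ≠ 0) {r : ℝ}
    (hr : 0 < r) : 0 < normBIntegrand B p x r := by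
  have hunit : IsUnit (exp (Real.log r • B)) := isUnit_exp _
  have hne : exp (Real.log r • B) *ᵥ x ≠ 0 := fun h =>
    hx (mulVec_injective_iff_isUnit.2 hunit (h.trans (mulVec_zero _).symm))
  exact div_pos (Real.rpow_pos_of_pos (norm_pos_iff.2 hne) p) hr

theorem continuousOn_normBIntegrand (B : Matrix n n ℝ) {p : ℝ} (hp : 0 ≤ p) (x : n → ℝ) :
    ContinuousOn (normBIntegrand B p x) (Ioi 0) := by
  have hlog : ContinuousOn (fun r : ℝ => Real.log r • B) (Ioi 0) :=
    (Real.continuousOn_log.mono fun r hr => ne_of_gt hr).smul continuousOn_const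
  have hexp : ContinuousOn (fun r : ℝ => exp (Real.log r • B) *ᵥ x) (Ioi 0) := by
    open scoped Norms.Operator in
    exact (exp_continuous.matrix_mulVec continuous_const).comp_continuousOn hlog
  exact (hexp.norm.rpow_const fun _ _ => Or.inr hp).div continuousOn_id fun r hr => ne_of_gt hr

theorem integrableOn_normBIntegrand_Ioc (B : Matrix n n ℝ)
    (hB : ∀ μ ∈ spectrum ℂ (B.map (algebraMap ℝ ℂ)), 0 < μ.re) {p : ℝ} (hp : 0 < p)
    (x : n → ℝ) (t : ℝ) : IntegrableOn (normBIntegrand B p x) (Ioc 0 t) := by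
  have hcont := continuousOn_normBIntegrand B hp.le x
  have hzero_one : IntegrableOn (normBIntegrand B p x) (Ioc 0 1) := by
    obtain ⟨ε, hε, C, hC⟩ := exists_norm_exp_smul_mulVec_le B hB x
    have hC0 : 0 ≤ C := by simpa using (norm_nonneg _).trans (hC 0 le_rfl)
    have hpow : IntegrableOn (fun r : ℝ => r ^ (ε * p - 1)) (Ioc 0 1) := by
      rw [← intervalIntegrable_iff_integrableOn_Ioc_of_le zero_le_one]
      exact intervalIntegral.intervalIntegrable_rpow' (by nlinarith)
    refine (hpow.const_mul (C ^ p)).mono'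
      ((hcont.mono Ioc_subset_Ioi_self).aestronglyMeasurable measurableSet_Ioc)
      ((ae_restrict_iff' measurableSet_Ioc).2 (ae_of_all _ fun r hr => ?_))
    have hbound : ‖exp (Real.log r • B) *ᵥ x‖ ≤ C * r ^ ε := by
      simpa [Real.rpow_def_of_pos hr.1, mul_comm] using hC _ (Real.log_nonpos hr.1.le hr.2)
    rw [Real.norm_of_nonneg (normBIntegrand_nonneg B p x hr.1.le)]
    calc normBIntegrand B p x r ≤ (C * r ^ ε) ^ p / r := by
          unfold normBIntegrand; gcongr; exact hr.1.le
      _ = C ^ p * r ^ (ε * p - 1) := by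
          rw [Real.mul_rpow hC0 (Real.rpow_nonneg hr.1.le ε), ← Real.rpow_mul hr.1.le,
            Real.rpow_sub hr.1, Real.rpow_one, mul_div_assoc]
  rcases le_or_gt t 1 with h | h
  · exact hzero_one.mono_set (Ioc_subset_Ioc_right h)
  · rw [← Ioc_union_Ioc_eq_Ioc zero_le_one h.le]
    have hone_t : IntegrableOn (normBIntegrand B p x) (Icc 1 t) :=
      (hcont.mono fun r hr => one_pos.trans_le hr.1).integrableOn_Icc
    exact hzero_one.union (hone_t.mono_set Ioc_subset_Icc_self)

end Integrand

theorem normB_exp_log_smul_mulVec {d : ℕ} (B : Matrix (Fin d) (Fin d) ℝ) (p : ℝ) (x : Fin d → ℝ)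
    {t : ℝ} (ht : 0 < t) :
    normB B p (exp (Real.log t • B) *ᵥ x) = (∫ r in Ioc 0 t, normBIntegrand B p x r) ^ (1 / p) := by
  have hshift : EqOn (fun s => ‖exp (Real.log s • B) *ᵥ (exp (Real.log t • B) *ᵥ x)‖ ^ p / s)
      (fun s => normBIntegrand B p x (s * t) * t) (Ioc 0 1) := fun s hs => by
    simp only [normBIntegrand, mulVec_mulVec, exp_log_smul_mul_exp_log_smul B hs.1 ht]
    field_simp
  rw [normB, setIntegral_congr_fun measurableSet_Ioc hshift,
    ← intervalIntegral.integral_of_le zero_le_one, intervalIntegral.integral_mul_const,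
    intervalIntegral.integral_comp_mul_right _ ht.ne', zero_mul, one_mul, smul_eq_mul,
    intervalIntegral.integral_of_le ht.le, mul_comm, mul_inv_cancel_left₀ ht.ne']

theorem strictMonoOn_setIntegral_Ioc {f : ℝ → ℝ} {a : ℝ}
    (hf : ∀ t, a < t → IntegrableOn f (Ioc a t)) (hpos : ∀ r, a < r → 0 < f r) :
    StrictMonoOn (fun t => ∫ r in Ioc a t, f r) (Ioi a) := by
  intro s hs t ht hst
  have hsplit : ∫ r in Ioc a t, f r = (∫ r in Ioc a s, f r) + ∫ r in Ioc s t, f r := by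
    rw [← Ioc_union_Ioc_eq_Ioc (le_of_lt hs) hst.le, setIntegral_union
      (Ioc_disjoint_Ioc_of_le le_rfl) measurableSet_Ioc
      ((hf t ht).mono_set (Ioc_subset_Ioc_right hst.le))
      ((hf t ht).mono_set (Ioc_subset_Ioc_left (le_of_lt hs)))]
  have hmid : 0 < ∫ r in Ioc s t, f r := by
    rw [← intervalIntegral.integral_of_le hst.le]
    refine intervalIntegral.intervalIntegral_pos_of_pos_on ?_
      (fun r hr => hpos r (hs.trans hr.1)) hst
    rw [intervalIntegrable_iff_integrableOn_Ioc_of_le hst.le]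
    exact (hf t ht).mono_set (Ioc_subset_Ioc_left (le_of_lt hs))
  simp only [hsplit]
  linarith

/-- For `x ≠ 0`, the map `t ↦ ‖t^B x‖_B` is strictly increasing on `(0,∞)`. -/
theorem stmt_10 (d : ℕ) (B : Matrix (Fin d) (Fin d) ℝ) (p : ℝ) (hp : 1 ≤ p)
    (hspec : ∀ μ ∈ spectrum ℂ (B.map (algebraMap ℝ ℂ)), 0 < μ.re)
    (x : Fin d → ℝ) (hx : x ≠ 0) :
    StrictMonoOn
      (fun t : ℝ => normB B p ((NormedSpace.exp ((Real.log t) • B)).mulVec x))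
      (Ioi (0 : ℝ)) := by
  have hp0 : 0 < p := by linarith
  have hmono := strictMonoOn_setIntegral_Ioc
    (fun t _ => integrableOn_normBIntegrand_Ioc B hspec hp0 x t)
    (fun r hr => normBIntegrand_pos B p hx hr)
  intro s hs t ht hst
  simp only [normB_exp_log_smul_mulVec B p x hs, normB_exp_log_smul_mulVec B p x ht]
  exact Real.rpow_lt_rpow
    (setIntegral_nonneg measurableSet_Ioc fun r hr => normBIntegrand_nonneg B p x hr.1.le)
    (hmono hs ht hst) (by positivity)
end
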